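/- arXiv:1702.06741 — 2 statements merged into one kernel-verified Lean document; each statement's English description precedes it below -/
import Mathlib

section
/- With notation as in the preceding lemma (α continuous, S' + αS = 0, S(0) = I, α-inner product on H(ℝ^d)), for any a ∈ ℝ^d the path h(t) := S(t)(∫₀ᵗ (S(s)*S(s))⁻¹ ds)(∫₀¹ (S(s)*S(s))⁻¹ ds)⁻¹ S(1)⁻¹ a satisfies h(1) = a and ‖h‖_α = inf{‖k‖_α : k ∈ H(ℝ^d), k(1) = a}; i.e., h is the unique minimal α-norm element of H(ℝ^d) with endpoint a. -/
/-!
Put `T = S⁻¹`, so that `T' = T α` and `(T k)' = T (k' + α k)` for every path `k`. Integrating,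
`∫₀¹ (Tᵀ w) ⬝ (k' + α k) = w ⬝ T(1) k(1)` for every `k` with `k(0) = 0`. Since
`(SᴴS)⁻¹ = T Tᵀ`, the path `h` satisfies `h' + α h = Tᵀ w` with `w = (∫₀¹ T Tᵀ)⁻¹ S(1)⁻¹ a`,
so for every admissible `k` with `k(1) = a = h(1)` the difference `(k' + α k) - (h' + α h)` is
`L²`-orthogonal to `h' + α h`, and Pythagoras gives `‖h‖_α ≤ ‖k‖_α`. In case of equality
`k' + α k = h' + α h` a.e., so `T (k - h)` has derivative zero a.e. and vanishes at `0`, whence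
`k = h`. Invertibility of `S` follows from uniqueness for the linear ODE `x' = -α x`.
-/

open Matrix
open scoped Matrix.Norms.L2Operator

open Set MeasureTheory

variable {ι : Type*} [Fintype ι]

noncomputable def Matrix.mulVecCLM (ι : Type*) [Fintype ι] [DecidableEq ι] :
    Matrix ι ι ℝ →L[ℝ] (ι → ℝ) →L[ℝ] ι → ℝ :=
  LinearMap.toContinuousLinearMap
    (LinearMap.toContinuousLinearMap.toLinearMap ∘ₗ Matrix.toLin'.toLinearMap)

@[simp]
theorem Matrix.mulVecCLM_apply [DecidableEq ι] (M : Matrix ι ι ℝ) (v : ι → ℝ) :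
    Matrix.mulVecCLM ι M v = M *ᵥ v := rfl

noncomputable def dotProductCLM (w : ι → ℝ) : (ι → ℝ) →L[ℝ] ℝ :=
  LinearMap.toContinuousLinearMap (dotProductBilin ℝ ℝ w)

@[simp]
theorem dotProductCLM_apply (w v : ι → ℝ) : dotProductCLM w v = w ⬝ᵥ v := rfl

theorem HasDerivWithinAt.const_dotProduct {x : ℝ → ι → ℝ} {x' : ι → ℝ} {s : Set ℝ} {t : ℝ}
    (w : ι → ℝ) (hx : HasDerivWithinAt x x' s t) :
    HasDerivWithinAt (fun τ => w ⬝ᵥ x τ) (w ⬝ᵥ x') s t :=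
  (dotProductCLM w).hasFDerivAt.comp_hasDerivWithinAt t hx

section Calculus

variable [DecidableEq ι] {M : ℝ → Matrix ι ι ℝ} {M' : Matrix ι ι ℝ} {x : ℝ → ι → ℝ}
  {x' : ι → ℝ} {s : Set ℝ} {t : ℝ}

theorem HasDerivWithinAt.matrix_mulVec (hM : HasDerivWithinAt M M' s t)
    (hx : HasDerivWithinAt x x' s t) :
    HasDerivWithinAt (fun τ => M τ *ᵥ x τ) (M' *ᵥ x t + M t *ᵥ x') s t := by
  simpa using ((Matrix.mulVecCLM ι).hasFDerivAt.comp_hasDerivWithinAt t hM).clm_apply hx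

theorem HasDerivWithinAt.matrix_inv (hM : HasDerivWithinAt M M' s t) (hMt : IsUnit (M t)) :
    HasDerivWithinAt (fun τ => (M τ)⁻¹) (-((M t)⁻¹ * M' * (M t)⁻¹)) s t := by
  have hinv := hasFDerivAt_ringInverse (𝕜 := ℝ) hMt.unit
  rw [hMt.unit_spec, ← Ring.inverse_unit hMt.unit, hMt.unit_spec] at hinv
  simpa [Function.comp_def, ← Matrix.nonsing_inv_eq_ringInverse] using
    hinv.comp_hasDerivWithinAt t hM

end Calculus

section FTC

variable {E : Type*} [NormedAddCommGroup E] [NormedSpace ℝ E] [CompleteSpace E]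
  {f f' : ℝ → E} {a b c : ℝ}

theorem integral_eq_sub_of_hasDerivWithinAt_Icc
    (hf : ∀ t ∈ Icc a b, HasDerivWithinAt f (f' t) (Icc a b) t) (hc : c ∈ Icc a b)
    (hint : IntervalIntegrable f' volume a c) :
    ∫ t in a..c, f' t = f c - f a :=
  intervalIntegral.integral_eq_sub_of_hasDerivAt_of_le hc.1
    (fun t ht => (hf t ⟨ht.1, ht.2.trans hc.2⟩).continuousWithinAt.mono
      (Icc_subset_Icc_right hc.2))
    (fun t ht => (hf t ⟨ht.1.le, ht.2.le.trans hc.2⟩).hasDerivAt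
      (Icc_mem_nhds ht.1 (ht.2.trans_le hc.2)))
    hint

theorem hasDerivWithinAt_integral_of_continuousOn
    (hf : ContinuousOn f (Icc a b)) (hc : c ∈ Icc a b) :
    HasDerivWithinAt (fun u => ∫ t in a..u, f t) (f c) (Icc a b) c := by
  have : Fact (c ∈ Icc a b) := ⟨hc⟩
  refine intervalIntegral.integral_hasDerivWithinAt_right ?_
    ⟨Icc a b, self_mem_nhdsWithin, hf.aestronglyMeasurable measurableSet_Icc⟩ (hf c hc)
  exact (hf.mono (uIcc_subset_Icc (left_mem_Icc.2 (hc.1.trans hc.2)) hc)).intervalIntegrable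

end FTC

section LinearODE

variable [DecidableEq ι] {α S : ℝ → Matrix ι ι ℝ} {a b : ℝ}

theorem isUnit_of_hasDerivWithinAt_eq_neg_mul (hα : ContinuousOn α (Icc a b))
    (hS : ∀ t ∈ Icc a b, HasDerivWithinAt S (-(α t * S t)) (Icc a b) t) (hSa : IsUnit (S a))
    {t₀ : ℝ} (ht₀ : t₀ ∈ Icc a b) : IsUnit (S t₀) := by
  obtain ⟨C, hC⟩ := isCompact_Icc.exists_bound_of_continuousOn
    ((Matrix.mulVecCLM ι).continuous.comp_continuousOn hα)
  have hlip : ∀ t ∈ Ioc a t₀, LipschitzOnWith C.toNNReal (fun x => -(α t *ᵥ x)) univ := by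
    intro t ht
    have hle : ‖-Matrix.mulVecCLM ι (α t)‖ ≤ C.toNNReal := by
      rw [norm_neg]
      exact (hC t ⟨ht.1.le, ht.2.trans ht₀.2⟩).trans (Real.le_coe_toNNReal C)
    exact (ContinuousLinearMap.lipschitzWith_of_opNorm_le hle).lipschitzOnWith
  -- `τ ↦ S τ *ᵥ u` solves `x' = -α x`, so it vanishes identically once it vanishes at `t₀`.
  have hker : ∀ u, S t₀ *ᵥ u = 0 → u = 0 := by
    intro u hu
    have hd : ∀ t ∈ Icc a b,
        HasDerivWithinAt (fun τ => S τ *ᵥ u) (-(α t *ᵥ (S t *ᵥ u))) (Icc a b) t := by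
      intro t ht
      have hd := (hS t ht).matrix_mulVec (hasDerivWithinAt_const t _ u)
      rwa [mulVec_zero, add_zero, neg_mulVec, ← mulVec_mulVec] at hd
    have hsol : ∀ t ∈ Ioc a t₀,
        HasDerivWithinAt (fun τ => S τ *ᵥ u) (-(α t *ᵥ (S t *ᵥ u))) (Iic t) t := fun t ht =>
      (hd t ⟨ht.1.le, ht.2.trans ht₀.2⟩).mono_of_mem_nhdsWithin (Filter.mem_of_superset
        (Icc_mem_nhdsLE ht.1) (Icc_subset_Icc_right (ht.2.trans ht₀.2)))
    have hzero : ∀ t ∈ Ioc a t₀,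
        HasDerivWithinAt (fun _ => (0 : ι → ℝ)) (-(α t *ᵥ 0)) (Iic t) t := by
      intro t _
      simpa using hasDerivWithinAt_const t (Iic t) (0 : ι → ℝ)
    have hcont : ContinuousOn (fun τ => S τ *ᵥ u) (Icc a t₀) := fun t ht =>
      (hd t ⟨ht.1, ht.2.trans ht₀.2⟩).continuousWithinAt.mono (Icc_subset_Icc_right ht₀.2)
    have := ODE_solution_unique_of_mem_Icc_left hlip hcont hsol (fun _ _ => mem_univ _)
      continuousOn_const hzero (fun _ _ => mem_univ _) hu (left_mem_Icc.2 ht₀.1)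
    simpa using (mulVec_injective_iff_isUnit.2 hSa) (this.trans (mulVec_zero _).symm)
  rw [← mulVec_injective_iff_isUnit]
  exact (injective_iff_map_eq_zero (S t₀).mulVecLin).2 hker

theorem hasDerivWithinAt_inv_of_eq_neg_mul {s : Set ℝ} {t : ℝ}
    (hS : HasDerivWithinAt S (-(α t * S t)) s t) (hSt : IsUnit (S t)) :
    HasDerivWithinAt (fun τ => (S τ)⁻¹) ((S t)⁻¹ * α t) s t := by
  refine (hS.matrix_inv hSt).congr_deriv ?_
  have hSS : S t * (S t)⁻¹ = 1 := mul_nonsing_inv _ ((isUnit_iff_isUnit_det _).mp hSt)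
  calc -((S t)⁻¹ * -(α t * S t) * (S t)⁻¹) = (S t)⁻¹ * α t * (S t * (S t)⁻¹) := by noncomm_ring
    _ = (S t)⁻¹ * α t := by rw [hSS, mul_one]

end LinearODE

section L2

theorem dotProduct_self_nonneg_real (v : ι → ℝ) : 0 ≤ v ⬝ᵥ v := by
  simpa using dotProduct_self_star_nonneg v

variable {X : Type*} [MeasurableSpace X] {μ : Measure X} {f g : X → ι → ℝ}

theorem integrable_dotProduct (hf : MemLp f 2 μ) (hg : MemLp g 2 μ) :
    Integrable (fun x => f x ⬝ᵥ g x) μ :=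
  integrable_finsetSum _ fun i _ => (hf.eval i).integrable_mul (hg.eval i)

theorem memLp_two_of_integrable_dotProduct_self (hf : AEStronglyMeasurable f μ)
    (hff : Integrable (fun x => f x ⬝ᵥ f x) μ) : MemLp f 2 μ := by
  refine MemLp.of_eval fun i => ?_
  have hfi : AEStronglyMeasurable (fun x => f x i) μ :=
    (continuous_apply i).comp_aestronglyMeasurable hf
  refine (memLp_two_iff_integrable_sq hfi).2 (hff.mono' (hfi.pow 2) (ae_of_all _ fun x => ?_))
  rw [Real.norm_eq_abs, abs_of_nonneg (sq_nonneg _), sq]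
  exact Finset.single_le_sum (f := fun j => f x j * f x j) (fun j _ => mul_self_nonneg _)
    (Finset.mem_univ i)

theorem integral_dotProduct_self_le_of_integral_dotProduct_eq (hf : MemLp f 2 μ)
    (hg : MemLp g 2 μ) (hfg : ∫ x, f x ⬝ᵥ g x ∂μ = ∫ x, f x ⬝ᵥ f x ∂μ) :
    ∫ x, f x ⬝ᵥ f x ∂μ ≤ ∫ x, g x ⬝ᵥ g x ∂μ ∧
      (∫ x, g x ⬝ᵥ g x ∂μ = ∫ x, f x ⬝ᵥ f x ∂μ → g =ᵐ[μ] f) := by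
  have hexpand : ∀ x, (g x - f x) ⬝ᵥ (g x - f x) =
      g x ⬝ᵥ g x - 2 * (f x ⬝ᵥ g x) + f x ⬝ᵥ f x := fun x => by
    simp only [sub_dotProduct, dotProduct_sub, dotProduct_comm (g x) (f x)]
    ring
  have hpyth : ∫ x, (g x - f x) ⬝ᵥ (g x - f x) ∂μ =
      ∫ x, g x ⬝ᵥ g x ∂μ - ∫ x, f x ⬝ᵥ f x ∂μ := by
    have hcross : Integrable (fun x => g x ⬝ᵥ g x - 2 * (f x ⬝ᵥ g x)) μ :=
      (integrable_dotProduct hg hg).sub ((integrable_dotProduct hf hg).const_mul 2)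
    simp only [hexpand]
    rw [integral_add hcross (integrable_dotProduct hf hf),
      integral_sub (integrable_dotProduct hg hg) ((integrable_dotProduct hf hg).const_mul 2),
      integral_const_mul, hfg]
    ring
  have hnonneg : 0 ≤ ∫ x, (g x - f x) ⬝ᵥ (g x - f x) ∂μ :=
    integral_nonneg fun x => dotProduct_self_nonneg_real _
  refine ⟨by linarith, fun heq => ?_⟩
  have hzero : (fun x => (g x - f x) ⬝ᵥ (g x - f x)) =ᵐ[μ] 0 :=
    (integral_eq_zero_iff_of_nonneg (fun x => dotProduct_self_nonneg_real _)
      (integrable_dotProduct (hg.sub hf) (hg.sub hf))).1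
      (by simp only [Pi.sub_apply]; rw [hpyth, heq, sub_self])
  filter_upwards [hzero] with x hx
  exact sub_eq_zero.1 (dotProduct_self_eq_zero.1 hx)

end L2

section IntervalL2

variable {E : Type*} [NormedAddCommGroup E] {a b : ℝ}

theorem ContinuousOn.memLp_restrict_Ioc {f : ℝ → E} (hf : ContinuousOn f (Icc a b))
    (p : ENNReal) : MemLp f p (volume.restrict (Ioc a b)) := by
  obtain ⟨C, hC⟩ := isCompact_Icc.exists_bound_of_continuousOn hf
  refine MemLp.of_bound ((hf.aestronglyMeasurable measurableSet_Icc).mono_measure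
    (Measure.restrict_mono Ioc_subset_Icc_self le_rfl)) C ?_
  filter_upwards [ae_restrict_mem measurableSet_Ioc] with t ht
  exact hC t (Ioc_subset_Icc_self ht)

theorem aestronglyMeasurable_of_hasDerivWithinAt_Icc [NormedSpace ℝ E] [CompleteSpace E]
    {k k' : ℝ → E} (hk : ∀ t ∈ Icc a b, HasDerivWithinAt k (k' t) (Icc a b) t) :
    AEStronglyMeasurable k' (volume.restrict (Ioc a b)) := by
  rw [Measure.restrict_congr_set Ioo_ae_eq_Ioc.symm]
  refine (stronglyMeasurable_deriv k).aestronglyMeasurable.congr ?_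
  filter_upwards [ae_restrict_mem measurableSet_Ioo] with t ht
  exact ((hk t (Ioo_subset_Icc_self ht)).hasDerivAt (Icc_mem_nhds ht.1 ht.2)).deriv

end IntervalL2

section AlphaDerivative

variable {α T : ℝ → Matrix ι ι ℝ} {h h' k k' : ℝ → ι → ℝ}

theorem memLp_two_alphaDeriv (hα : ContinuousOn α (Icc 0 1))
    (hk : ∀ t ∈ Icc (0 : ℝ) 1, HasDerivWithinAt k (k' t) (Icc 0 1) t)
    (hk2 : IntervalIntegrable (fun t => k' t ⬝ᵥ k' t) volume 0 1) :
    MemLp (fun t => k' t + α t *ᵥ k t) 2 (volume.restrict (Ioc 0 1)) := by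
  have hk'2 : MemLp k' 2 (volume.restrict (Ioc 0 1)) :=
    memLp_two_of_integrable_dotProduct_self (aestronglyMeasurable_of_hasDerivWithinAt_Icc hk)
      ((intervalIntegrable_iff_integrableOn_Ioc_of_le zero_le_one).1 hk2)
  have hαk : ContinuousOn (fun t => α t *ᵥ k t) (Icc 0 1) :=
    (continuous_fst.matrix_mulVec continuous_snd).comp_continuousOn
      (hα.prodMk fun t ht => (hk t ht).continuousWithinAt)
  exact hk'2.add (hαk.memLp_restrict_Ioc 2)

variable [DecidableEq ι]

theorem HasDerivWithinAt.mulVec_alphaDeriv {s : Set ℝ} {t : ℝ} {v : ι → ℝ}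
    (hT : HasDerivWithinAt T (T t * α t) s t) (hk : HasDerivWithinAt k v s t) :
    HasDerivWithinAt (fun τ => T τ *ᵥ k τ) (T t *ᵥ (v + α t *ᵥ k t)) s t :=
  (hT.matrix_mulVec hk).congr_deriv (by rw [mulVec_add, mulVec_mulVec, add_comm])

theorem integral_dotProduct_mulVec_alphaDeriv
    (hT : ∀ t ∈ Icc (0 : ℝ) 1, HasDerivWithinAt T (T t * α t) (Icc 0 1) t)
    (hk : ∀ t ∈ Icc (0 : ℝ) 1, HasDerivWithinAt k (k' t) (Icc 0 1) t) (w : ι → ℝ) {t : ℝ}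
    (ht : t ∈ Icc (0 : ℝ) 1)
    (hint : IntervalIntegrable (fun s => w ⬝ᵥ (T s *ᵥ (k' s + α s *ᵥ k s))) volume 0 t) :
    ∫ s in 0..t, w ⬝ᵥ (T s *ᵥ (k' s + α s *ᵥ k s)) =
      w ⬝ᵥ (T t *ᵥ k t) - w ⬝ᵥ (T 0 *ᵥ k 0) :=
  integral_eq_sub_of_hasDerivWithinAt_Icc
    (fun s hs => ((hT s hs).mulVec_alphaDeriv (hk s hs)).const_dotProduct w) ht hint

theorem eqOn_of_alphaDeriv_ae_eq
    (hT : ∀ t ∈ Icc (0 : ℝ) 1, HasDerivWithinAt T (T t * α t) (Icc 0 1) t)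
    (hTu : ∀ t ∈ Icc (0 : ℝ) 1, IsUnit (T t))
    (hk : ∀ t ∈ Icc (0 : ℝ) 1, HasDerivWithinAt k (k' t) (Icc 0 1) t)
    (hh : ∀ t ∈ Icc (0 : ℝ) 1, HasDerivWithinAt h (h' t) (Icc 0 1) t) (h0 : k 0 = h 0)
    (hae : ∀ᵐ t ∂volume.restrict (Ioc 0 1), k' t + α t *ᵥ k t = h' t + α t *ᵥ h t) :
    EqOn k h (Icc 0 1) := by
  intro t ht
  set w := T t *ᵥ (k t - h t)
  have hzero : ∀ᵐ s ∂volume.restrict (Ioc 0 t),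
      w ⬝ᵥ (T s *ᵥ ((k' s - h' s) + α s *ᵥ (k s - h s))) = 0 := by
    filter_upwards [ae_restrict_of_ae_restrict_of_subset (Ioc_subset_Ioc_right ht.2) hae]
      with s hs
    rw [mulVec_sub, sub_add_sub_comm, hs, sub_self, mulVec_zero, dotProduct_zero]
  have hint : IntervalIntegrable
      (fun s => w ⬝ᵥ (T s *ᵥ ((k' s - h' s) + α s *ᵥ (k s - h s)))) volume 0 t :=
    (intervalIntegrable_iff_integrableOn_Ioc_of_le ht.1).2
      ((integrable_zero _ _ _).congr (hzero.mono fun _ hs => hs.symm))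
  have hftc := integral_dotProduct_mulVec_alphaDeriv (k := fun s => k s - h s) hT
    (fun s hs => (hk s hs).sub (hh s hs)) w ht hint
  rw [intervalIntegral.integral_of_le ht.1, integral_eq_zero_of_ae hzero] at hftc
  have hw : w = 0 := by
    simpa [h0, w] using hftc.symm
  exact sub_eq_zero.1 ((mulVec_injective_iff_isUnit.2 (hTu t ht)) (hw.trans (mulVec_zero _).symm))

end AlphaDerivative

section Minimizer

variable {α T : ℝ → Matrix ι ι ℝ} {h h' k k' : ℝ → ι → ℝ}

/-- `‖k‖_α²` for the path `k` with derivative `k'`. -/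
noncomputable def alphaNormSq (α : ℝ → Matrix ι ι ℝ) (k k' : ℝ → ι → ℝ) : ℝ :=
  ∫ t in (0 : ℝ)..1, (k' t + α t *ᵥ k t) ⬝ᵥ (k' t + α t *ᵥ k t)

variable [DecidableEq ι]

theorem setIntegral_dotProduct_alphaDeriv_of_eq_transpose_mulVec
    (hT : ∀ t ∈ Icc (0 : ℝ) 1, HasDerivWithinAt T (T t * α t) (Icc 0 1) t)
    {φ : ℝ → ι → ℝ} {w : ι → ℝ} (hφ : ∀ t ∈ Icc (0 : ℝ) 1, φ t = (T t)ᵀ *ᵥ w)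
    (hφ2 : MemLp φ 2 (volume.restrict (Ioc 0 1)))
    (hk : ∀ t ∈ Icc (0 : ℝ) 1, HasDerivWithinAt k (k' t) (Icc 0 1) t)
    (hk2 : MemLp (fun t => k' t + α t *ᵥ k t) 2 (volume.restrict (Ioc 0 1))) (hk0 : k 0 = 0) :
    ∫ t in Ioc 0 1, φ t ⬝ᵥ (k' t + α t *ᵥ k t) = w ⬝ᵥ (T 1 *ᵥ k 1) := by
  have hae : (fun t => φ t ⬝ᵥ (k' t + α t *ᵥ k t)) =ᵐ[volume.restrict (Ioc 0 1)]
      fun t => w ⬝ᵥ (T t *ᵥ (k' t + α t *ᵥ k t)) := by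
    filter_upwards [ae_restrict_mem measurableSet_Ioc] with t ht
    rw [hφ t (Ioc_subset_Icc_self ht), mulVec_transpose, ← dotProduct_mulVec]
  rw [integral_congr_ae hae, ← intervalIntegral.integral_of_le zero_le_one,
    integral_dotProduct_mulVec_alphaDeriv hT hk w (right_mem_Icc.2 zero_le_one), hk0,
    mulVec_zero, dotProduct_zero, sub_zero]
  exact (intervalIntegrable_iff_integrableOn_Ioc_of_le zero_le_one).2
    ((integrable_dotProduct hφ2 hk2).congr hae)

theorem alphaNormSq_le_of_alphaDeriv_eq_transpose_mulVec (hα : ContinuousOn α (Icc 0 1))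
    (hT : ∀ t ∈ Icc (0 : ℝ) 1, HasDerivWithinAt T (T t * α t) (Icc 0 1) t)
    (hTu : ∀ t ∈ Icc (0 : ℝ) 1, IsUnit (T t))
    (hh : ∀ t ∈ Icc (0 : ℝ) 1, HasDerivWithinAt h (h' t) (Icc 0 1) t) (hh0 : h 0 = 0)
    {w : ι → ℝ} (hφ : ∀ t ∈ Icc (0 : ℝ) 1, h' t + α t *ᵥ h t = (T t)ᵀ *ᵥ w)
    (hk : ∀ t ∈ Icc (0 : ℝ) 1, HasDerivWithinAt k (k' t) (Icc 0 1) t) (hk0 : k 0 = 0)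
    (hk2 : IntervalIntegrable (fun t => k' t ⬝ᵥ k' t) volume 0 1) (hk1 : k 1 = h 1) :
    alphaNormSq α h h' ≤ alphaNormSq α k k' ∧
      (alphaNormSq α k k' = alphaNormSq α h h' → EqOn k h (Icc 0 1)) := by
  have hφc : ContinuousOn (fun t => (T t)ᵀ *ᵥ w) (Icc 0 1) :=
    (continuous_id.matrix_transpose.matrix_mulVec continuous_const).comp_continuousOn
      fun t ht => (hT t ht).continuousWithinAt
  have hh2 : MemLp (fun t => h' t + α t *ᵥ h t) 2 (volume.restrict (Ioc 0 1)) := by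
    refine (hφc.memLp_restrict_Ioc 2).ae_eq ?_
    filter_upwards [ae_restrict_mem measurableSet_Ioc] with t ht
    exact (hφ t (Ioc_subset_Icc_self ht)).symm
  have hk2' := memLp_two_alphaDeriv hα hk hk2
  have hcross := setIntegral_dotProduct_alphaDeriv_of_eq_transpose_mulVec hT hφ hh2 hk hk2' hk0
  have hself := setIntegral_dotProduct_alphaDeriv_of_eq_transpose_mulVec hT hφ hh2 hh hh2 hh0
  obtain ⟨hle, hae⟩ :=
    integral_dotProduct_self_le_of_integral_dotProduct_eq hh2 hk2' (by rw [hcross, hself, hk1])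
  simp only [alphaNormSq, intervalIntegral.integral_of_le zero_le_one]
  exact ⟨hle, fun heq => eqOn_of_alphaDeriv_ae_eq hT hTu hk hh (hk0.trans hh0.symm) (hae heq)⟩

end Minimizer

section ExplicitMinimizer

variable [DecidableEq ι]

theorem isUnit_integral_mul_transpose {a b : ℝ} (hab : a < b) {T : ℝ → Matrix ι ι ℝ}
    (hT : ContinuousOn T (Icc a b)) (hTu : ∀ t ∈ Icc a b, IsUnit (T t)) :
    IsUnit (∫ t in a..b, T t * (T t)ᵀ) := by
  have hTTc : ContinuousOn (fun t => T t * (T t)ᵀ) (Icc a b) :=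
    hT.mul (continuous_id.matrix_transpose.comp_continuousOn hT)
  rw [← mulVec_injective_iff_isUnit]
  refine (injective_iff_map_eq_zero (mulVecLin _)).2 fun v hv => ?_
  by_contra hne
  let q := (dotProductCLM v).comp ((Matrix.mulVecCLM ι).flip v)
  have hpos : 0 < ∫ t in a..b, q (T t * (T t)ᵀ) := by
    refine intervalIntegral.intervalIntegral_pos_of_pos_on
      ((q.continuous.comp_continuousOn hTTc).intervalIntegrable_of_Icc hab.le)
      (fun t ht => ?_) hab
    have hTv : (T t)ᵀ *ᵥ v ≠ 0 := fun h0 => hne <|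
      mulVec_injective_iff_isUnit.2 ((isUnit_transpose _).2 (hTu t (Ioo_subset_Icc_self ht)))
        (h0.trans (mulVec_zero _).symm)
    have := dotProduct_self_star_pos_iff.2 hTv
    simp only [star_trivial] at this
    simpa [q, ← mulVec_mulVec, dotProduct_mulVec, ← mulVec_transpose] using this
  have hv' : (∫ t in a..b, T t * (T t)ᵀ) *ᵥ v = 0 := hv
  rw [q.intervalIntegral_comp_comm (hTTc.intervalIntegrable_of_Icc hab.le)] at hpos
  simp [q, hv'] at hpos

theorem inv_conjTranspose_mul_self_eq (S : Matrix ι ι ℝ) : (Sᴴ * S)⁻¹ = S⁻¹ * S⁻¹ᵀ := by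
  rw [Matrix.mul_inv_rev, conjTranspose_eq_transpose_of_trivial, transpose_nonsing_inv]

theorem alphaDeriv_eq_transpose_inv_mulVec {α S : ℝ → Matrix ι ι ℝ} {h h' : ℝ → ι → ℝ}
    (hS : ∀ t ∈ Icc (0 : ℝ) 1, HasDerivWithinAt S (-(α t * S t)) (Icc 0 1) t)
    (hSu : ∀ t ∈ Icc (0 : ℝ) 1, IsUnit (S t)) {w : ι → ℝ}
    (hdef : h = fun t => S t *ᵥ ((∫ s in (0 : ℝ)..t, ((S s)ᴴ * S s)⁻¹) *ᵥ w))
    (hh : ∀ t ∈ Icc (0 : ℝ) 1, HasDerivWithinAt h (h' t) (Icc 0 1) t) {t : ℝ}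
    (ht : t ∈ Icc (0 : ℝ) 1) :
    h' t + α t *ᵥ h t = (S t)⁻¹ᵀ *ᵥ w := by
  have hTc : ContinuousOn (fun s => (S s)⁻¹) (Icc 0 1) := fun s hs =>
    (hasDerivWithinAt_inv_of_eq_neg_mul (hS s hs) (hSu s hs)).continuousWithinAt
  have hGc : ContinuousOn (fun s => ((S s)ᴴ * S s)⁻¹) (Icc 0 1) := by
    simp_rw [inv_conjTranspose_mul_self_eq]
    exact hTc.mul (continuous_id.matrix_transpose.comp_continuousOn hTc)
  have hd := (hS t ht).matrix_mulVec
    ((hasDerivWithinAt_integral_of_continuousOn hGc ht).matrix_mulVec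
      (hasDerivWithinAt_const t _ w))
  rw [← hdef] at hd
  rw [(uniqueDiffOn_Icc zero_lt_one t ht).eq_deriv _ (hh t ht) hd, hdef, mulVec_zero, add_zero,
    neg_mulVec, ← mulVec_mulVec, neg_add_cancel_comm, mulVec_mulVec,
    inv_conjTranspose_mul_self_eq, mul_nonsing_inv_cancel_left _ _
      ((isUnit_iff_isUnit_det _).1 (hSu t ht))]

end ExplicitMinimizer

/-- The path `h t = S t (∫₀ᵗ (SᴴS)⁻¹)(∫₀¹ (SᴴS)⁻¹)⁻¹ S(1)⁻¹ a` has endpoint `a` and is the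
unique element of minimal `α`-norm among Cameron–Martin paths with endpoint `a`. -/
theorem stmt6 {d : ℕ} (α S : ℝ → Matrix (Fin d) (Fin d) ℝ) (a : Fin d → ℝ)
    (hα : ContinuousOn α (Set.Icc (0 : ℝ) 1))
    (hS : ∀ t ∈ Set.Icc (0 : ℝ) 1,
      HasDerivWithinAt S (-(α t * S t)) (Set.Icc (0 : ℝ) 1) t)
    (hS0 : S 0 = 1)
    (h h' : ℝ → Fin d → ℝ)
    (hdef : h = fun t => S t *ᵥ ((∫ s in (0 : ℝ)..t, ((S s)ᴴ * S s)⁻¹) *ᵥ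
      ((∫ s in (0 : ℝ)..1, ((S s)ᴴ * S s)⁻¹)⁻¹ *ᵥ ((S 1)⁻¹ *ᵥ a))))
    (hh' : ∀ t ∈ Set.Icc (0 : ℝ) 1, HasDerivWithinAt h (h' t) (Set.Icc (0 : ℝ) 1) t) :
    h 1 = a ∧
      (∀ k k' : ℝ → Fin d → ℝ, k 0 = 0 →
        (∀ t ∈ Set.Icc (0 : ℝ) 1, HasDerivWithinAt k (k' t) (Set.Icc (0 : ℝ) 1) t) →
        IntervalIntegrable (fun t => (k' t) ⬝ᵥ (k' t)) MeasureTheory.volume 0 1 →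
        k 1 = a →
        (∫ t in (0 : ℝ)..1, (h' t + α t *ᵥ h t) ⬝ᵥ (h' t + α t *ᵥ h t)) ≤
            ∫ t in (0 : ℝ)..1, (k' t + α t *ᵥ k t) ⬝ᵥ (k' t + α t *ᵥ k t) ∧
          ((∫ t in (0 : ℝ)..1, (k' t + α t *ᵥ k t) ⬝ᵥ (k' t + α t *ᵥ k t)) =
              (∫ t in (0 : ℝ)..1, (h' t + α t *ᵥ h t) ⬝ᵥ (h' t + α t *ᵥ h t)) →
            ∀ t ∈ Set.Icc (0 : ℝ) 1, k t = h t)) := by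
  have hSu : ∀ t ∈ Icc (0 : ℝ) 1, IsUnit (S t) := fun t ht =>
    isUnit_of_hasDerivWithinAt_eq_neg_mul hα hS (hS0 ▸ isUnit_one) ht
  have hT : ∀ t ∈ Icc (0 : ℝ) 1,
      HasDerivWithinAt (fun τ => (S τ)⁻¹) ((S t)⁻¹ * α t) (Icc 0 1) t := fun t ht =>
    hasDerivWithinAt_inv_of_eq_neg_mul (hS t ht) (hSu t ht)
  have hTu : ∀ t ∈ Icc (0 : ℝ) 1, IsUnit (S t)⁻¹ := fun t ht =>
    isUnit_nonsing_inv_iff.2 (hSu t ht)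
  have hGram : IsUnit (∫ s in (0 : ℝ)..1, ((S s)ᴴ * S s)⁻¹) := by
    simp_rw [inv_conjTranspose_mul_self_eq]
    exact isUnit_integral_mul_transpose zero_lt_one
      (fun t ht => (hT t ht).continuousWithinAt) hTu
  have h0 : h 0 = 0 := by simp [hdef]
  have h1 : h 1 = a := by
    simp only [hdef, mulVec_mulVec]
    rw [mul_nonsing_inv_cancel_left _ _ ((isUnit_iff_isUnit_det _).1 hGram),
      mul_nonsing_inv _ ((isUnit_iff_isUnit_det _).1 (hSu 1 (right_mem_Icc.2 zero_le_one))),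
      one_mulVec]
  refine ⟨h1, fun k k' hk0 hk hk2 hk1 => ?_⟩
  exact alphaNormSq_le_of_alphaDeriv_eq_transpose_mulVec hα hT hTu hh' h0
    (fun t ht => alphaDeriv_eq_transpose_inv_mulVec hS hSu hdef hh' ht) hk hk0 hk2
    (hk1.trans h1.symm)
end

section
/- Let α : [0,1] → End(ℝ^d) be continuous, and define K : [0,1] → End(ℝ^d) by K_s = T_s (∫₀ˢ T_r⁻¹(T_r⁻¹)* dr) T₁*, where T solves T' + αT = 0, T(0) = I. Then for fixed a ∈ ℝ^d, the path J_s := K_s K₁⁻¹ a satisfies the ODE J'_s = -α(s)J_s + φ_s with J₀ = 0, where φ_s = (T₁T_s⁻¹)* K₁⁻¹ a. -/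
/-!
The fundamental solution is invertible: if `T s v = 0`, then `t ↦ T t v` solves the linear
equation `x' = -α x` and vanishes at `s`, so by backward uniqueness (Grönwall) it vanishes
at `0`, where it equals `v`. Hence `r ↦ T_r⁻¹ (T_r⁻¹)ᴴ` is continuous and the fundamental
theorem of calculus together with the product rule gives
`K' s = -α s K s + T s T_s⁻¹ (T_s⁻¹)ᴴ (T 1)ᴴ = -α s K s + (T 1 T_s⁻¹)ᴴ`;
applying this to the constant vector `K₁⁻¹ a` is the claimed equation for `J`.
-/

open Matrix Set
open scoped Matrix.Norms.L2Operator

theorem eqOn_zero_of_hasDerivWithinAt_clm_apply {E : Type*} [NormedAddCommGroup E]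
    [NormedSpace ℝ E] {A : ℝ → E →L[ℝ] E} {x : ℝ → E} {a b : ℝ}
    (hA : ContinuousOn A (Icc a b))
    (hx : ∀ t ∈ Icc a b, HasDerivWithinAt x (A t (x t)) (Icc a b) t) (hb : x b = 0) :
    EqOn x 0 (Icc a b) := by
  obtain ⟨C, hC⟩ := isCompact_Icc.exists_bound_of_continuousOn hA
  have hLip : ∀ t ∈ Ioc a b, LipschitzOnWith C.toNNReal (A t) univ := fun t ht =>
    ((A t).lipschitz.weaken <| by
      rw [← norm_toNNReal]
      exact Real.toNNReal_le_toNNReal (hC t (Ioc_subset_Icc_self ht))).lipschitzOnWith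
  refine ODE_solution_unique_of_mem_Icc_left (s := fun _ => univ) (g := fun _ => 0) hLip
    (fun t ht => (hx t ht).continuousWithinAt) (fun t ht => ?_) (fun _ _ => trivial)
    continuousOn_const (fun t _ => ?_) (fun _ _ => trivial) hb
  · exact (hx t (Ioc_subset_Icc_self ht)).mono_of_mem_nhdsWithin (Icc_mem_nhdsLE_of_mem ht)
  · simpa using hasDerivWithinAt_const t (Iic t) (0 : E)

theorem ContinuousOn.hasDerivWithinAt_integral_Icc {E : Type*} [NormedAddCommGroup E]
    [NormedSpace ℝ E] [CompleteSpace E] {f : ℝ → E} {a b s : ℝ}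
    (hf : ContinuousOn f (Icc a b)) (hs : s ∈ Icc a b) :
    HasDerivWithinAt (fun u => ∫ r in a..u, f r) (f s) (Icc a b) s := by
  have : Fact (s ∈ Icc a b) := ⟨hs⟩
  exact intervalIntegral.integral_hasDerivWithinAt_right
    ((hf.mono (uIcc_subset_Icc (left_mem_Icc.2 (hs.1.trans hs.2)) hs)).intervalIntegrable)
    (hf.stronglyMeasurableAtFilter_nhdsWithin measurableSet_Icc s) (hf s hs)

section

variable {n : Type*} [Fintype n] [DecidableEq n]

theorem ContinuousOn.matrix_inv {K X : Type*} [Field K] [TopologicalSpace K]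
    [IsTopologicalDivisionRing K] [TopologicalSpace X] {A : X → Matrix n n K} {s : Set X}
    (hA : ContinuousOn A s) (h : ∀ x ∈ s, IsUnit (A x)) :
    ContinuousOn (fun x => (A x)⁻¹) s := fun x hx =>
  (continuousAt_matrix_inv _ (by
    rw [Ring.inverse_eq_inv']
    exact continuousAt_inv₀ ((isUnit_iff_isUnit_det _).mp (h x hx)).ne_zero))
    |>.comp_continuousWithinAt (hA x hx)

theorem HasDerivWithinAt.matrix_mulVec_const {m : Type*} [Fintype m]
    {M : ℝ → Matrix m n ℝ} {M' : Matrix m n ℝ} {s : Set ℝ} {t : ℝ}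
    (h : HasDerivWithinAt M M' s t) (v : n → ℝ) :
    HasDerivWithinAt (fun u => M u *ᵥ v) (M' *ᵥ v) s t :=
  (LinearMap.toContinuousLinearMap ((mulVecBilin ℝ ℝ).flip v)).hasFDerivAt
    |>.comp_hasDerivWithinAt (x := t) (f := M) h

theorem isUnit_of_hasDerivWithinAt_mul_left {B T : ℝ → Matrix n n ℝ} {a b s : ℝ}
    (hB : ContinuousOn B (Icc a b))
    (hT : ∀ t ∈ Icc a b, HasDerivWithinAt T (B t * T t) (Icc a b) t)
    (ha : IsUnit (T a)) (hs : s ∈ Icc a b) : IsUnit (T s) := by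
  let toCLM : Matrix n n ℝ →ₗ[ℝ] (n → ℝ) →L[ℝ] (n → ℝ) :=
    LinearMap.toContinuousLinearMap.toLinearMap ∘ₗ Matrix.toLin'.toLinearMap
  have hIcc : Icc a s ⊆ Icc a b := Icc_subset_Icc_right hs.2
  rw [← mulVec_injective_iff_isUnit, ← coe_mulVecLin, injective_iff_map_eq_zero]
  intro v hv
  have hx := eqOn_zero_of_hasDerivWithinAt_clm_apply (A := fun t => toCLM (B t))
    (x := fun t => T t *ᵥ v)
    (toCLM.continuous_of_finiteDimensional.comp_continuousOn (hB.mono hIcc)) (fun t ht => ?_) hv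
  · exact mulVec_injective_iff_isUnit.mpr ha (by simpa using hx ⟨le_rfl, hs.1⟩)
  · simpa [toCLM, mulVec_mulVec] using ((hT t (hIcc ht)).matrix_mulVec_const v).mono hIcc

theorem hasDerivWithinAt_mul_integral_inv_mul_conjTranspose_mul {T T' : ℝ → Matrix n n ℝ}
    {a b s : ℝ} (hT : ∀ t ∈ Icc a b, HasDerivWithinAt T (T' t) (Icc a b) t)
    (hU : ∀ t ∈ Icc a b, IsUnit (T t)) (C : Matrix n n ℝ) (hs : s ∈ Icc a b) :
    HasDerivWithinAt (fun u => T u * (∫ r in a..u, (T r)⁻¹ * ((T r)⁻¹)ᴴ) * C)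
      (T' s * (∫ r in a..s, (T r)⁻¹ * ((T r)⁻¹)ᴴ) * C + ((T s)⁻¹)ᴴ * C) (Icc a b) s := by
  have hTinv : ContinuousOn (fun r => (T r)⁻¹) (Icc a b) :=
    ContinuousOn.matrix_inv (fun t ht => (hT t ht).continuousWithinAt) hU
  have hG : HasDerivWithinAt (fun u => ∫ r in a..u, (T r)⁻¹ * ((T r)⁻¹)ᴴ)
      ((T s)⁻¹ * ((T s)⁻¹)ᴴ) (Icc a b) s :=
    (hTinv.mul (continuous_id.matrix_conjTranspose.comp_continuousOn hTinv))
      |>.hasDerivWithinAt_integral_Icc hs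
  refine (((hT s hs).mul hG).mul_const C).congr_deriv ?_
  rw [← mul_assoc (T s), mul_nonsing_inv _ ((isUnit_iff_isUnit_det _).mp (hU s hs)), one_mul,
    add_mul]

end

/-- With `T' + αT = 0`, `T 0 = 1`, `K s = T s (∫₀ˢ T_r⁻¹ (T_r⁻¹)ᴴ dr) (T 1)ᴴ`, the path
`J s = K s K₁⁻¹ a` satisfies `J 0 = 0` and the ODE `J' s = -α s J s + φ s`, where
`φ s = (T 1 (T s)⁻¹)ᴴ K₁⁻¹ a`. -/
theorem stmt9 {d : ℕ} (α T : ℝ → Matrix (Fin d) (Fin d) ℝ) (a : Fin d → ℝ)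
    (hα : ContinuousOn α (Set.Icc (0 : ℝ) 1))
    (hT : ∀ t ∈ Set.Icc (0 : ℝ) 1,
      HasDerivWithinAt T (-(α t * T t)) (Set.Icc (0 : ℝ) 1) t)
    (hT0 : T 0 = 1)
    (K : ℝ → Matrix (Fin d) (Fin d) ℝ)
    (hK : K = fun s => T s * (∫ r in (0 : ℝ)..s, (T r)⁻¹ * ((T r)⁻¹)ᴴ) * (T 1)ᴴ)
    (J : ℝ → Fin d → ℝ)
    (hJ : J = fun s => K s *ᵥ ((K 1)⁻¹ *ᵥ a)) :
    J 0 = 0 ∧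
      ∀ s ∈ Set.Icc (0 : ℝ) 1,
        HasDerivWithinAt J (-(α s *ᵥ J s) + (T 1 * (T s)⁻¹)ᴴ *ᵥ ((K 1)⁻¹ *ᵥ a))
          (Set.Icc (0 : ℝ) 1) s := by
  have hU : ∀ t ∈ Icc (0 : ℝ) 1, IsUnit (T t) := fun t ht =>
    isUnit_of_hasDerivWithinAt_mul_left hα.neg (fun t ht => by simpa using hT t ht)
      (hT0 ▸ isUnit_one) ht
  subst hJ hK
  refine ⟨by simp, fun s hs => ?_⟩
  convert (hasDerivWithinAt_mul_integral_inv_mul_conjTranspose_mul hT hU _ hs)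
    |>.matrix_mulVec_const _ using 1
  simp only [add_mul, add_mulVec, neg_mul, neg_mulVec, mulVec_mulVec, conjTranspose_mul, mul_assoc]
end
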